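/- arXiv:2603.13702 — 2 statements merged into one kernel-verified Lean document; each statement's English description precedes it below -/
import Mathlib

section
/- Let A and B be real symmetric n×n matrices. Let u ∈ ℝⁿ be a unit vector with A·u = λ·u for some λ ∈ ℝ, and let v_1, …, v_n be an orthonormal basis of ℝⁿ with B·v_i = μ_i·v_i for reals μ_1, …, μ_n. Suppose there is δ > 0 such that |μ_i − λ| ≥ δ for every i ≥ 2. Then √(1 − ⟨u, v_1⟩²) ≤ ‖(A − B)·u‖₂ / δ. -/
open Matrix BigOperators

/-- **One-dimensional Davis–Kahan sin-Θ bound.**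
Let `A, B` be real symmetric `n × n` matrices, `u` a unit eigenvector of `A` with
eigenvalue `lam`, and `v 0, …, v (n-1)` an orthonormal eigenbasis of `B` with
eigenvalues `μ i`.  If `|μ i − lam| ≥ δ > 0` for every `i ≠ 0`, then
`√(1 − ⟨u, v 0⟩²) ≤ ‖(A − B)·u‖₂ / δ`. -/
theorem davis_kahan_one_dim
    (n : ℕ) (hn : 0 < n)
    (A B : Matrix (Fin n) (Fin n) ℝ)
    (hA : Aᵀ = A) (hB : Bᵀ = B)
    (u : Fin n → ℝ) (hu : ∑ k, (u k) ^ 2 = 1)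
    (lam : ℝ) (hAu : A.mulVec u = lam • u)
    (v : Fin n → Fin n → ℝ)
    (hv : ∀ i j : Fin n, ∑ k, v i k * v j k = if i = j then (1 : ℝ) else 0)
    (μ : Fin n → ℝ) (hBv : ∀ i, B.mulVec (v i) = μ i • v i)
    (δ : ℝ) (hδpos : 0 < δ)
    (hgap : ∀ i : Fin n, i ≠ ⟨0, hn⟩ → δ ≤ |μ i - lam|) :
    Real.sqrt (1 - (∑ k, u k * v ⟨0, hn⟩ k) ^ 2)
      ≤ Real.sqrt (∑ k, ((A - B).mulVec u k) ^ 2) / δ := by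
  classical
  set i0 : Fin n := ⟨0, hn⟩
  set c : Fin n → ℝ := fun i => ∑ k, u k * v i k with hc
  set w : Fin n → ℝ := (A - B).mulVec u with hw
  -- columns are also orthonormal
  have hVtV : ∀ k l : Fin n, ∑ i, v i k * v i l = if k = l then (1:ℝ) else 0 := by
    have h1 : (Matrix.of v) * (Matrix.of v)ᵀ = 1 := by
      ext i j
      simpa [Matrix.mul_apply, Matrix.one_apply] using hv i j
    have h2 : (Matrix.of v)ᵀ * (Matrix.of v) = 1 := mul_eq_one_comm.mp h1
    intro k l
    have := congrFun (congrFun h2 k) l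
    simpa [Matrix.mul_apply, Matrix.one_apply] using this
  -- Parseval
  have parseval : ∀ x : Fin n → ℝ,
      ∑ i, (∑ k, x k * v i k) ^ 2 = ∑ k, (x k) ^ 2 := by
    intro x
    calc ∑ i, (∑ k, x k * v i k) ^ 2
        = ∑ i, ∑ k, ∑ l, (x k * x l) * (v i k * v i l) := by
          refine Finset.sum_congr rfl fun i _ => ?_
          rw [sq, Finset.sum_mul_sum]
          exact Finset.sum_congr rfl fun k _ => Finset.sum_congr rfl fun l _ => by ring
      _ = ∑ k, ∑ l, (x k * x l) * (∑ i, v i k * v i l) := by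
          rw [Finset.sum_comm]
          refine Finset.sum_congr rfl fun k _ => ?_
          rw [Finset.sum_comm]
          simp [Finset.mul_sum]
      _ = ∑ k, (x k) ^ 2 := by
          refine Finset.sum_congr rfl fun k _ => ?_
          simp [hVtV, mul_ite, sq]
  have hcsum : ∑ i, (c i) ^ 2 = 1 := by rw [hc]; simpa using (parseval u).trans hu
  -- ⟨w, v i⟩ = (lam - μ i) * c i
  have hwv : ∀ i, ∑ k, w k * v i k = (lam - μ i) * c i := by
    intro i
    have hBu : ∑ k, (B.mulVec u) k * v i k = μ i * c i := by
      calc ∑ k, (B.mulVec u) k * v i k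
          = ∑ k, ∑ j, (B k j * u j) * v i k := by
            refine Finset.sum_congr rfl fun k _ => ?_
            rw [Matrix.mulVec, dotProduct, Finset.sum_mul]
        _ = ∑ j, u j * ∑ k, B k j * v i k := by
            rw [Finset.sum_comm]
            refine Finset.sum_congr rfl fun j _ => ?_
            rw [Finset.mul_sum]
            exact Finset.sum_congr rfl fun k _ => by ring
        _ = ∑ j, u j * (μ i * v i j) := by
            refine Finset.sum_congr rfl fun j _ => ?_
            congr 1
            have : ∑ k, B k j * v i k = (Bᵀ.mulVec (v i)) j := by
              simp [Matrix.mulVec, dotProduct, Matrix.transpose_apply]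
            rw [this, hB, hBv i]
            simp
        _ = μ i * c i := by
            rw [hc, Finset.mul_sum]
            exact Finset.sum_congr rfl fun j _ => by ring
    have hAuk : ∑ k, (A.mulVec u) k * v i k = lam * c i := by
      rw [hAu, hc, Finset.mul_sum]
      exact Finset.sum_congr rfl fun k _ => by simp [Pi.smul_apply]; ring
    calc ∑ k, w k * v i k
        = ∑ k, ((A.mulVec u) k * v i k - (B.mulVec u) k * v i k) := by
          refine Finset.sum_congr rfl fun k _ => ?_
          rw [hw, Matrix.sub_mulVec]
          simp [sub_mul]
      _ = lam * c i - μ i * c i := by rw [Finset.sum_sub_distrib, hAuk, hBu]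
      _ = (lam - μ i) * c i := by ring
  -- key inequality
  have key : δ ^ 2 * (1 - (c i0) ^ 2) ≤ ∑ k, (w k) ^ 2 := by
    have hsplit : ∑ i ∈ Finset.univ.erase i0, (c i) ^ 2 = 1 - (c i0) ^ 2 := by
      have := Finset.sum_erase_add Finset.univ (fun i => (c i) ^ 2) (Finset.mem_univ i0)
      rw [hcsum] at this
      have h2 : ∑ i ∈ Finset.univ.erase i0, c i ^ 2 + c i0 ^ 2 = 1 := by
        simpa using this
      linarith
    calc δ ^ 2 * (1 - (c i0) ^ 2)
        = ∑ i ∈ Finset.univ.erase i0, δ ^ 2 * (c i) ^ 2 := by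
          rw [← Finset.mul_sum, hsplit]
      _ ≤ ∑ i ∈ Finset.univ.erase i0, ((lam - μ i) * c i) ^ 2 := by
          refine Finset.sum_le_sum fun i hi => ?_
          have hi' : i ≠ i0 := Finset.ne_of_mem_erase hi
          have h1 : δ ^ 2 ≤ (lam - μ i) ^ 2 := by
            have := pow_le_pow_left₀ hδpos.le (hgap i hi') 2
            rwa [sq_abs, show (μ i - lam)^2 = (lam - μ i)^2 by ring] at this
          rw [mul_pow]
          exact mul_le_mul_of_nonneg_right h1 (sq_nonneg _)
      _ ≤ ∑ i, ((lam - μ i) * c i) ^ 2 :=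
          Finset.sum_le_sum_of_subset_of_nonneg (Finset.subset_univ _)
            (fun i _ _ => sq_nonneg _)
      _ = ∑ k, (w k) ^ 2 := by
          rw [← parseval w]
          exact Finset.sum_congr rfl fun i _ => by rw [hwv i]
  -- conclude
  rw [le_div_iff₀ hδpos] at *
  have h1 : Real.sqrt (1 - (c i0) ^ 2) * δ = Real.sqrt (δ ^ 2 * (1 - (c i0) ^ 2)) := by
    rw [Real.sqrt_mul (sq_nonneg δ), Real.sqrt_sq hδpos.le, mul_comm]
  rw [h1]
  exact Real.sqrt_le_sqrt key
end

section
/- Let n ≥ k ≥ 1 and let U, V ∈ ℝ^{n×k} have orthonormal columns, i.e. UᵀU = I_k and VᵀV = I_k. Then there exists an orthogonal k×k matrix R (RᵀR = I_k) such that ‖U − V·R‖_F² ≤ 2·(k − ‖Vᵀ·U‖_F²). -/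
/-!
Put `M = Vᵀ U`. Since `U` and `V` have orthonormal columns, `M` is a contraction:
`1 - Mᵀ M = Uᵀ (1 - V Vᵀ) U ≥ 0`. Take the polar decomposition `M = R P` with `R` orthogonal and
`P = (Mᵀ M)^{1/2}`. Then `(U - V R)ᵀ (U - V R) = 2 (1 - P)`, so `‖U - V R‖_F² = 2 (k - tr P)`,
while `0 ≤ P` and `P² ≤ 1` force `P² ≤ P`, hence `tr P ≥ tr P² = ‖M‖_F²`.
-/

open Matrix
open scoped MatrixOrder ComplexOrder

theorem LinearIsometryEquiv.exists_apply_eq_of_norm_eq {𝕜 E F : Type*} [RCLike 𝕜]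
    [NormedAddCommGroup E] [InnerProductSpace 𝕜 E] [FiniteDimensional 𝕜 E]
    [AddCommGroup F] [Module 𝕜 F] {f g : F →ₗ[𝕜] E} (h : ∀ x, ‖f x‖ = ‖g x‖) :
    ∃ u : E ≃ₗᵢ[𝕜] E, ∀ x, u (g x) = f x := by
  have hker : LinearMap.ker g ≤ LinearMap.ker f := fun x hx => by
    rw [LinearMap.mem_ker, ← norm_eq_zero, h, norm_eq_zero]
    exact hx
  let L : LinearMap.range g →ₗ[𝕜] E :=
    (LinearMap.ker g).liftQ f hker ∘ₗ g.quotKerEquivRange.symm.toLinearMap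
  have hL : ∀ x, L ⟨g x, LinearMap.mem_range_self g x⟩ = f x := fun x => by
    simp [L, LinearMap.quotKerEquivRange_symm_apply_image]
  let Li : LinearMap.range g →ₗᵢ[𝕜] E := ⟨L, by rintro ⟨_, x, rfl⟩; rw [hL, h]; rfl⟩
  exact ⟨Li.extend.toLinearIsometryEquiv rfl, fun x =>
    (Li.extend_apply ⟨g x, LinearMap.mem_range_self g x⟩).trans (hL x)⟩

namespace Matrix

variable {m n 𝕜 : Type*} [Fintype m] [Fintype n] [RCLike 𝕜]

theorem sum_sq_eq_trace_transpose_mul_self {R : Type*} [CommSemiring R] (A : Matrix m n R) :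
    ∑ i, ∑ j, A i j ^ 2 = (Aᵀ * A).trace := by
  simp [trace, mul_apply, sq, Finset.sum_comm (γ := m)]

variable [DecidableEq n]

theorem exists_mem_unitaryGroup_eq_mul_of_conjTranspose_mul_self_eq {M P : Matrix n n 𝕜}
    (h : Mᴴ * M = Pᴴ * P) : ∃ R ∈ unitaryGroup n 𝕜, M = R * P := by
  have hnorm : ∀ x, ‖toEuclideanLin M x‖ = ‖toEuclideanLin P x‖ := fun x => by
    simp only [← coe_toEuclideanCLM_eq_toEuclideanLin, ContinuousLinearMap.coe_coe,
      ContinuousLinearMap.apply_norm_eq_sqrt_inner_adjoint_left,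
      ← ContinuousLinearMap.star_eq_adjoint, ← ContinuousLinearMap.mul_def, ← map_star, ← map_mul,
      star_eq_conjTranspose, h]
  obtain ⟨u, hu⟩ := LinearIsometryEquiv.exists_apply_eq_of_norm_eq hnorm
  refine ⟨(toEuclideanCLM (n := n) (𝕜 := 𝕜)).symm (u : EuclideanSpace 𝕜 n →L[𝕜] _),
    Unitary.map_mem _ (Unitary.linearIsometryEquiv.symm u).2, ?_⟩
  refine EquivLike.injective (toEuclideanCLM (n := n) (𝕜 := 𝕜)) ?_
  rw [map_mul, StarAlgEquiv.apply_symm_apply]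
  ext1 x
  exact (hu x).symm

theorem exists_mem_unitaryGroup_eq_mul_sqrt (M : Matrix n n 𝕜) :
    ∃ R ∈ unitaryGroup n 𝕜, M = R * CFC.sqrt (Mᴴ * M) :=
  exists_mem_unitaryGroup_eq_mul_of_conjTranspose_mul_self_eq <| by
    rw [(CFC.sqrt_nonneg (Mᴴ * M)).posSemidef.isHermitian.eq,
      CFC.sqrt_mul_sqrt_self _ (posSemidef_conjTranspose_mul_self M).nonneg]

theorem conjTranspose_mul_self_sub_mul {U V : Matrix m n 𝕜} {R : Matrix n n 𝕜}
    (hU : Uᴴ * U = 1) (hV : Vᴴ * V = 1) (hR : Rᴴ * R = 1) :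
    (U - V * R)ᴴ * (U - V * R) = 1 - (Rᴴ * (Vᴴ * U))ᴴ - Rᴴ * (Vᴴ * U) + 1 := by
  simp only [conjTranspose_sub, conjTranspose_mul, conjTranspose_conjTranspose, Matrix.sub_mul,
    Matrix.mul_sub, Matrix.mul_assoc, hU]
  rw [← Matrix.mul_assoc Vᴴ V, hV, Matrix.one_mul, hR]
  abel

theorem mul_self_le_self_of_mul_self_le_one {A : Matrix n n 𝕜} (h0 : 0 ≤ A) (h1 : A * A ≤ 1) :
    A * A ≤ A := by
  have hcubic : 0 ≤ A * (1 - A * A) :=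
    Commute.mul_nonneg h0 (sub_nonneg.2 h1)
      ((Commute.one_right A).sub_right ((Commute.refl A).mul_right (Commute.refl A)))
  have hconj : 0 ≤ (1 - A) * A * (1 - A) := by
    simpa [h0.isSelfAdjoint.star_eq] using star_left_conjugate_nonneg h0 (1 - A)
  -- `x - x² = (x (1 - x²) + x (1 - x)²) / 2` spares us from proving `A ≤ 1`.
  have hsum : A * (1 - A * A) + (1 - A) * A * (1 - A) = (2 : 𝕜) • (A - A * A) := by
    rw [two_smul]
    noncomm_ring
  have hhalf : A - A * A = (2⁻¹ : 𝕜) • (A * (1 - A * A) + (1 - A) * A * (1 - A)) := by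
    rw [hsum, smul_smul, inv_mul_cancel₀ two_ne_zero, one_smul]
  rw [← sub_nonneg, hhalf]
  exact ((add_nonneg hcubic hconj).posSemidef.smul (by positivity)).nonneg

variable [DecidableEq m]

theorem conjTranspose_mul_conjTranspose_mul_le_one {U V : Matrix m n 𝕜} (hU : Uᴴ * U = 1)
    (hV : Vᴴ * V = 1) : (Vᴴ * U)ᴴ * (Vᴴ * U) ≤ 1 := by
  have hproj : (1 - V * Vᴴ)ᴴ * (1 - V * Vᴴ) = 1 - V * Vᴴ := by
    simp only [conjTranspose_sub, conjTranspose_one, conjTranspose_mul, conjTranspose_conjTranspose,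
      Matrix.sub_mul, Matrix.mul_sub, Matrix.one_mul, Matrix.mul_one, Matrix.mul_assoc]
    rw [← Matrix.mul_assoc Vᴴ V, hV, Matrix.one_mul]
    abel
  have hdefect : 1 - (Vᴴ * U)ᴴ * (Vᴴ * U) = ((1 - V * Vᴴ) * U)ᴴ * ((1 - V * Vᴴ) * U) := by
    rw [conjTranspose_mul (1 - V * Vᴴ) U, Matrix.mul_assoc, ← Matrix.mul_assoc (1 - V * Vᴴ)ᴴ, hproj,
      Matrix.sub_mul, Matrix.mul_sub, Matrix.one_mul, hU, conjTranspose_mul,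
      conjTranspose_conjTranspose, Matrix.mul_assoc, Matrix.mul_assoc]
  rw [le_iff, hdefect]
  exact posSemidef_conjTranspose_mul_self _

end Matrix

theorem procrustes_alignment_bound_general
    (n k : ℕ)
    (U V : Matrix (Fin n) (Fin k) ℝ)
    (hU : Uᵀ * U = 1)
    (hV : Vᵀ * V = 1) :
    ∃ R : Matrix (Fin k) (Fin k) ℝ, Rᵀ * R = 1 ∧
      ∑ i, ∑ j, ((U - V * R) i j) ^ 2 ≤
        2 * ((k : ℝ) - ∑ i, ∑ j, ((Vᵀ * U) i j) ^ 2) := by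
  simp only [sum_sq_eq_trace_transpose_mul_self, ← conjTranspose_eq_transpose_of_trivial] at hU hV ⊢
  obtain ⟨R, hR, hpolar⟩ := (Vᴴ * U).exists_mem_unitaryGroup_eq_mul_sqrt
  set P := CFC.sqrt ((Vᴴ * U)ᴴ * (Vᴴ * U))
  have hP : 0 ≤ P := CFC.sqrt_nonneg _
  have hPP : P * P = (Vᴴ * U)ᴴ * (Vᴴ * U) :=
    CFC.sqrt_mul_sqrt_self _ (posSemidef_conjTranspose_mul_self _).nonneg
  have hRR : Rᴴ * R = 1 := mem_unitaryGroup_iff'.1 hR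
  have hRM : Rᴴ * (Vᴴ * U) = P := by rw [hpolar, ← Matrix.mul_assoc, hRR, Matrix.one_mul]
  have htrace : (P * P).trace ≤ P.trace := by
    have hgap := (le_iff.1 <| mul_self_le_self_of_mul_self_le_one hP <|
      hPP ▸ conjTranspose_mul_conjTranspose_mul_le_one hU hV).trace_nonneg
    rwa [trace_sub, sub_nonneg] at hgap
  refine ⟨R, hRR, ?_⟩
  rw [conjTranspose_mul_self_sub_mul hU hV hRR, hRM, hP.posSemidef.isHermitian.eq, ← hPP]
  simp only [trace_add, trace_sub, trace_one, Fintype.card_fin]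
  linarith

/-- **Procrustes alignment bound.**
Let `n ≥ k ≥ 1` and let `U, V ∈ ℝ^{n×k}` have orthonormal columns.  Then there exists an
orthogonal `k × k` matrix `R` such that `‖U − V·R‖_F² ≤ 2·(k − ‖Vᵀ·U‖_F²)`. -/
theorem procrustes_alignment_bound
    (n k : ℕ) (hk : 1 ≤ k) (hkn : k ≤ n)
    (U V : Matrix (Fin n) (Fin k) ℝ)
    (hU : Uᵀ * U = 1)
    (hV : Vᵀ * V = 1) :
    ∃ R : Matrix (Fin k) (Fin k) ℝ, Rᵀ * R = 1 ∧
      ∑ i, ∑ j, ((U - V * R) i j) ^ 2 ≤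
        2 * ((k : ℝ) - ∑ i, ∑ j, ((Vᵀ * U) i j) ^ 2) :=
  procrustes_alignment_bound_general n k U V hU hV
end
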